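/- arXiv:2508.06539 — 2 statements merged into one kernel-verified Lean document; each statement's English description precedes it below -/
import Mathlib

section
/- Let γ : ℝ → ℝ^d be twice continuously differentiable. Then lim_{N → ∞} N³ · Σ_{i=1}^{N−1} ‖γ((i+1)/N) − 2·γ(i/N) + γ((i−1)/N)‖² = ∫₀¹ ‖γ''(s)‖² ds. -/
/-!
Write `h = 1 / N`, so that `N³ ‖Δ‖² = h ‖h⁻² Δ‖²` for the second difference `Δ` at `i / N`.
Applying the mean value inequality twice shows that `h⁻² Δ_h γ (x) → γ'' x` uniformly on `[0, 1]`
as `h → 0⁺`, the error being controlled by the modulus of continuity of `γ''`. Hence the discrete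
energy is a left Riemann sum of uniform approximations of `‖γ''‖²`, minus its `i = 0` term,
which is `O(1/N)`.
-/

open Filter Set Topology

variable {E : Type*} [NormedAddCommGroup E] [NormedSpace ℝ E]

def symmSecondDiff (f : ℝ → E) (h x : ℝ) : E :=
  f (x + h) - (2 : ℝ) • f x + f (x - h)

/-- The mean value inequality, applied first to `k t = f' (x + t) - f' (x - t) - 2 t f'' x`
(whose derivative is `O(ε)`) and then to its primitive `f (x + t) + f (x - t) - t² f'' x`. -/
theorem norm_symmSecondDiff_sub_le {f : ℝ → E} (hf : Differentiable ℝ f)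
    (hf' : Differentiable ℝ (deriv f)) {x h ε : ℝ} (hh : 0 ≤ h)
    (hε : ∀ u ∈ Icc (x - h) (x + h), ‖deriv (deriv f) u - deriv (deriv f) x‖ ≤ ε) :
    ‖symmSecondDiff f h x - h ^ 2 • deriv (deriv f) x‖ ≤ 2 * ε * h ^ 2 := by
  set f'' := deriv (deriv f)
  have hε0 : 0 ≤ ε := by simpa using hε x ⟨by linarith, by linarith⟩
  let k : ℝ → E := fun t => deriv f (x + t) - deriv f (x - t) - (2 * t) • f'' x
  have hk : ∀ t, HasDerivAt k (f'' (x + t) + f'' (x - t) - (2 : ℝ) • f'' x) t := by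
    intro t
    have hadd := (hf' (x + t)).hasDerivAt.comp_const_add x t
    have hsub := (hf' (x - t)).hasDerivAt.comp_const_sub x t
    have hlin := ((hasDerivAt_id t).const_mul 2).smul_const (f'' x)
    exact ((hadd.sub hsub).sub hlin).congr_deriv (by simp [f'', two_smul])
  have hg : ∀ t, HasDerivAt (fun t => f (x + t) + f (x - t) - t ^ 2 • f'' x) (k t) t := by
    intro t
    have hadd := (hf (x + t)).hasDerivAt.comp_const_add x t
    have hsub := (hf (x - t)).hasDerivAt.comp_const_sub x t
    have hsq := (hasDerivAt_pow 2 t).smul_const (f'' x)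
    exact ((hadd.add hsub).sub hsq).congr_deriv (by simp [k, sub_eq_add_neg])
  have hk_le : ∀ t ∈ Icc 0 h, ‖k t‖ ≤ 2 * ε * t := by
    intro t ht
    have hk_sub := norm_image_sub_le_of_norm_deriv_le_segment' (C := 2 * ε)
      (fun t _ => (hk t).hasDerivWithinAt) (fun u hu => ?_) t ht
    · simpa [k] using hk_sub
    · rw [two_smul, add_sub_add_comm, two_mul]
      exact norm_add_le_of_le (hε _ ⟨by linarith [hu.1], by linarith [hu.2]⟩)
        (hε _ ⟨by linarith [hu.2], by linarith [hu.1]⟩)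
  have hg_sub := norm_image_sub_le_of_norm_deriv_le_segment' (C := 2 * ε * h)
    (fun t _ => (hg t).hasDerivWithinAt)
    (fun t ht => (hk_le t (Ico_subset_Icc_self ht)).trans (by gcongr; exact ht.2.le))
    h ⟨hh, le_rfl⟩
  convert hg_sub using 1
  · simp only [symmSecondDiff, add_zero, sub_zero, ne_eq, OfNat.ofNat_ne_zero,
      not_false_eq_true, zero_pow, zero_smul]
    congr 1
    module
  · ring

theorem tendstoUniformlyOn_symmSecondDiff_div_sq {f : ℝ → E} (hf : ContDiff ℝ 2 f)
    {K : Set ℝ} (hK : IsCompact K) :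
    TendstoUniformlyOn (fun h x => (h ^ 2)⁻¹ • symmSecondDiff f h x) (deriv (deriv f))
      (𝓝[>] 0) K := by
  have hf' : ContDiff ℝ 1 (deriv f) := hf.iterate_deriv' 1 1
  have hf'' : Continuous (deriv (deriv f)) := hf'.continuous_deriv le_rfl
  rw [Metric.tendstoUniformlyOn_iff]
  intro ε hε
  obtain ⟨δ, hδ, hδε⟩ := Metric.mem_uniformity_dist.mp
    (hK.uniformContinuousAt_of_continuousAt _ (fun x _ => hf''.continuousAt)
      (Metric.dist_mem_uniformity (by positivity : 0 < ε / 4)))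
  filter_upwards [Ioo_mem_nhdsGT hδ] with h hh x hx
  have hclose : ∀ u ∈ Icc (x - h) (x + h),
      ‖deriv (deriv f) u - deriv (deriv f) x‖ ≤ ε / 4 := by
    intro u hu
    rw [← dist_eq_norm, dist_comm]
    refine (hδε ?_ hx).le
    rw [Real.dist_eq, abs_lt]
    constructor <;> linarith [hu.1, hu.2, hh.2]
  have hh2 : 0 < h ^ 2 := pow_pos hh.1 2
  have hTaylor := norm_symmSecondDiff_sub_le (hf.differentiable two_ne_zero)
    (hf'.differentiable one_ne_zero) hh.1.le hclose
  rw [dist_eq_norm', ← inv_smul_smul₀ hh2.ne' (deriv (deriv f) x), ← smul_sub, norm_smul,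
    norm_inv, Real.norm_of_nonneg hh2.le, inv_mul_lt_iff₀ hh2]
  nlinarith

theorem TendstoUniformlyOn.norm_sq {ι α E : Type*} [SeminormedAddCommGroup E]
    {F : ι → α → E} {f : α → E} {p : Filter ι} {s : Set α} (h : TendstoUniformlyOn F f p s)
    (hf : BddAbove ((‖f ·‖) '' s)) :
    TendstoUniformlyOn (fun i x => ‖F i x‖ ^ 2) (fun x => ‖f x‖ ^ 2) p s := by
  obtain ⟨M, hM⟩ := hf
  have hnorm := uniformContinuous_norm.comp_tendstoUniformlyOn h
  have hsq : UniformContinuousOn (· ^ 2 : ℝ → ℝ) (Icc 0 (M + 1)) :=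
    isCompact_Icc.uniformContinuousOn_of_continuous (continuous_pow 2).continuousOn
  refine hsq.comp_tendstoUniformlyOn_eventually ?_ ?_ hnorm
  · filter_upwards [hnorm.eventually_forall_le (lt_add_one M)
      fun x hx => hM (mem_image_of_mem _ hx)] with i hi x hx
    exact ⟨norm_nonneg _, hi x hx⟩
  · exact fun x hx => ⟨norm_nonneg _, (hM (mem_image_of_mem _ hx)).trans (by linarith)⟩

theorem norm_intervalIntegral_sub_smul_le [CompleteSpace E] {f : ℝ → E} {a b ε : ℝ} {c : E}
    (hab : a ≤ b) (hf : IntervalIntegrable f MeasureTheory.volume a b)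
    (h : ∀ x ∈ Ioc a b, ‖f x - c‖ ≤ ε) :
    ‖(∫ x in a..b, f x) - (b - a) • c‖ ≤ ε * (b - a) := by
  rw [← intervalIntegral.integral_const,
    ← intervalIntegral.integral_sub hf intervalIntegrable_const,
    ← abs_of_nonneg (sub_nonneg.mpr hab)]
  exact intervalIntegral.norm_integral_le_of_norm_le_const (by rwa [uIoc_of_le hab])

theorem natCast_div_mem_Icc {k N : ℕ} (hk : k ≤ N) : (k / N : ℝ) ∈ Icc 0 1 :=
  ⟨by positivity, div_le_one_of_le₀ (by exact_mod_cast hk) (Nat.cast_nonneg N)⟩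

theorem intervalIntegral.sum_integral_div_eq [CompleteSpace E] {f : ℝ → E}
    (hf : IntervalIntegrable f MeasureTheory.volume 0 1) {N : ℕ} (hN : N ≠ 0) :
    ∑ i ∈ Finset.range N, ∫ x in (i / N : ℝ)..((i + 1 : ℕ) / N), f x = ∫ x in (0 : ℝ)..1, f x := by
  have hsub : ∀ k < N, uIcc (k / N : ℝ) ((k + 1 : ℕ) / N) ⊆ uIcc 0 1 := fun k hk => by
    rw [uIcc_of_le zero_le_one]
    exact uIcc_subset_Icc (natCast_div_mem_Icc hk.le) (natCast_div_mem_Icc hk)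
  rw [intervalIntegral.sum_integral_adjacent_intervals (a := fun k : ℕ => (k : ℝ) / N)
    fun k hk => hf.mono_set (hsub k hk)]
  simp [hN]

noncomputable def leftRiemannSum (f : ℝ → ℝ) (N : ℕ) : ℝ :=
  ∑ i ∈ Finset.range N, f (i / N) / N

theorem tendsto_leftRiemannSum_of_tendstoUniformlyOn {F : ℕ → ℝ → ℝ} {f : ℝ → ℝ}
    (hf : ContinuousOn f (Icc 0 1)) (hF : TendstoUniformlyOn F f atTop (Icc 0 1)) :
    Tendsto (fun N => leftRiemannSum (F N) N) atTop (𝓝 (∫ x in (0 : ℝ)..1, f x)) := by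
  rw [Metric.tendsto_nhds]
  intro ε hε
  obtain ⟨δ, hδ, hfδ⟩ := Metric.uniformContinuousOn_iff.mp
    (isCompact_Icc.uniformContinuousOn_of_continuous hf) (ε / 4) (by positivity)
  filter_upwards [Metric.tendstoUniformlyOn_iff.mp hF (ε / 4) (by positivity),
    tendsto_one_div_atTop_nhds_zero_nat.eventually (gt_mem_nhds hδ), eventually_ge_atTop 1]
    with N hFN hNδ hN
  have hwidth : ∀ i : ℕ, ((i + 1 : ℕ) : ℝ) / N - i / N = 1 / N := fun i => by push_cast; ring
  have hcell : ∀ i ∈ Finset.range N,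
      ‖(∫ x in (i / N : ℝ)..((i + 1 : ℕ) / N), f x) - F N (i / N) / N‖ ≤ ε / 2 / N := by
    intro i hi
    have hi := Finset.mem_range.mp hi
    have hleft := natCast_div_mem_Icc (N := N) hi.le
    have hright := natCast_div_mem_Icc hi
    have hclose : ∀ x ∈ Ioc (i / N : ℝ) ((i + 1 : ℕ) / N), ‖f x - F N (i / N)‖ ≤ ε / 2 := by
      intro x hx
      have hxI : x ∈ Icc (0 : ℝ) 1 := Icc_subset_Icc hleft.1 hright.2 (Ioc_subset_Icc_self hx)
      have hdist : dist x (i / N) < δ := by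
        rw [Real.dist_eq, abs_of_pos (sub_pos.mpr hx.1)]
        linarith [hx.2, hwidth i]
      rw [← dist_eq_norm]
      linarith [dist_triangle (f x) (f (i / N)) (F N (i / N)), hfδ x hxI _ hleft hdist,
        hFN _ hleft]
    have hint : IntervalIntegrable f MeasureTheory.volume (i / N) ((i + 1 : ℕ) / N) :=
      (hf.mono (uIcc_subset_Icc hleft hright)).intervalIntegrable
    have hcell := norm_intervalIntegral_sub_smul_le
      (by rw [← sub_nonneg, hwidth]; positivity) hint hclose
    rwa [hwidth, smul_eq_mul, one_div_mul_eq_div, mul_one_div] at hcell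
  rw [dist_comm, dist_eq_norm, leftRiemannSum,
    ← intervalIntegral.sum_integral_div_eq (hf.intervalIntegrable_of_Icc zero_le_one)
      (Nat.one_le_iff_ne_zero.mp hN),
    ← Finset.sum_sub_distrib]
  calc _ ≤ ∑ _i ∈ Finset.range N, ε / 2 / N := norm_sum_le_of_le _ hcell
    _ = ε / 2 := by simp; field_simp
    _ < ε := half_lt_self hε

/-- Convergence of the normalized discrete curvature energy to the
continuum one: `N³ Σ_{i=1}^{N-1} ‖γ((i+1)/N) - 2γ(i/N) + γ((i-1)/N)‖² → ∫₀¹ ‖γ''(s)‖² ds`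
as `N → ∞`. -/
theorem discrete_energy_tendsto {d : ℕ} (γ : ℝ → EuclideanSpace ℝ (Fin d))
    (hγ : ContDiff ℝ 2 γ) :
    Tendsto (fun N : ℕ =>
        (N : ℝ) ^ 3 * ∑ i ∈ Finset.Ico 1 N,
          ‖γ (((i : ℝ) + 1) / N) - (2:ℝ) • γ ((i : ℝ) / N) + γ (((i : ℝ) - 1) / N)‖ ^ 2)
      atTop (nhds (∫ s in (0:ℝ)..1, ‖deriv (deriv γ) s‖ ^ 2)) := by
  have hγ'' : Continuous (deriv (deriv γ)) := (hγ.iterate_deriv' 0 2).continuous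
  set G : ℕ → ℝ → ℝ := fun N x => ‖((N : ℝ)⁻¹ ^ 2)⁻¹ • symmSecondDiff γ (N : ℝ)⁻¹ x‖ ^ 2
  have hG : TendstoUniformlyOn G (fun x => ‖deriv (deriv γ) x‖ ^ 2) atTop (Icc 0 1) :=
    ((tendstoUniformlyOn_symmSecondDiff_div_sq hγ isCompact_Icc).seq_tendstoUniformlyOn _
      (tendsto_inv_atTop_nhdsGT_zero.comp tendsto_natCast_atTop_atTop)).norm_sq
      (isCompact_Icc.image hγ''.norm).bddAbove
  have hRiemann := tendsto_leftRiemannSum_of_tendstoUniformlyOn (hγ''.norm.pow 2).continuousOn hG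
  have hfirst : Tendsto (fun N : ℕ => G N 0 / N) atTop (𝓝 0) :=
    (hG.tendsto_at ⟨le_rfl, zero_le_one⟩).div_atTop tendsto_natCast_atTop_atTop
  refine (sub_zero (∫ s in (0 : ℝ)..1, ‖deriv (deriv γ) s‖ ^ 2) ▸ hRiemann.sub hfirst).congr' ?_
  filter_upwards [eventually_ge_atTop 1] with N hN
  rw [leftRiemannSum, Finset.sum_range_eq_add_Ico _ hN, Nat.cast_zero, zero_div,
    add_sub_cancel_left, Finset.mul_sum]
  refine Finset.sum_congr rfl fun i _ => ?_
  simp only [G, symmSecondDiff, norm_smul, add_div, sub_div, one_div, inv_pow, inv_inv,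
    Real.norm_of_nonneg (sq_nonneg (N : ℝ))]
  field_simp
end

section
/- Let γ : ℝ → ℝ^d be twice continuously differentiable, let t : ℝ → ℝ be continuous, and let σ > 0. Then lim_{N → ∞} N³ · Σ_{i=1}^{N−1} exp(−(t(i/N) − t((i+1)/N))²/(2σ²)) · ‖γ((i+1)/N) − 2·γ(i/N) + γ((i−1)/N)‖² = ∫₀¹ ‖γ''(s)‖² ds. -/
/-!
Write `h = 1/N`. The `i`-th summand is `h · w · ‖D_h γ (i h)‖²`, where
`D_h γ x = h⁻² (γ (x + h) - 2 γ x + γ (x - h))` is the second difference quotient. By the mean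
value inequality `D_h γ → γ''` uniformly on `[0, 1]`, and the Gaussian weight `w → 1` uniformly
because it is jointly continuous in `(h, x)` and equals `1` at `h = 0`. So each summand is
`h ‖γ'' (i h)‖²` up to an error `o(h)` uniform in `i`, and the sum converges like a Riemann sum.
Riemann sums of a continuous `f` are handled the same way: they are uniformly close to the sums
of the cell averages `∫₀¹ f (x + h s) ds`, which add up to exactly `∫₀¹ f`.
-/

open Filter Topology Set

section UniformConvergence

theorem IsCompact.tendstoUniformlyOn_of_continuous {α β γ : Type*} [TopologicalSpace α]
    [TopologicalSpace β] [UniformSpace γ] {f : α → β → γ} {K : Set β} (hK : IsCompact K)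
    (hf : Continuous ↿f) (a : α) : TendstoUniformlyOn f (f a) (𝓝 a) K := fun u hu => by
  obtain ⟨v, hv, hvu⟩ :=
    hK.mem_uniformity_of_prod hf.continuousOn (mem_univ a) (symm_le_uniformity hu)
  rw [nhdsWithin_univ] at hv
  filter_upwards [hv] with p hp x hx using hvu p hp x hx

variable {ι α β γ : Type*} [UniformSpace β] {F : ι → α → β} {f : α → β} {p : Filter ι}
  {s : Set α}

theorem TendstoUniformlyOn.mono_left {p' : Filter ι} (h : TendstoUniformlyOn F f p s)
    (hp : p' ≤ p) : TendstoUniformlyOn F f p' s :=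
  fun u hu => hp (h u hu)

theorem TendstoUniformlyOn.prodMk_diag [UniformSpace γ] {F' : ι → α → γ} {f' : α → γ}
    (h : TendstoUniformlyOn F f p s) (h' : TendstoUniformlyOn F' f' p s) :
    TendstoUniformlyOn (fun n x => (F n x, F' n x)) (fun x => (f x, f' x)) p s :=
  fun u hu => ((h.prodMk h') u hu).diag_of_prod

theorem TendstoUniformlyOn.comp_of_isCompact [UniformSpace γ] {g : β → γ} {K : Set β}
    (h : TendstoUniformlyOn F f p s) (hK : IsCompact K) (hg : Continuous g)
    (hfK : ∀ x ∈ s, f x ∈ K) :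
    TendstoUniformlyOn (fun n x => g (F n x)) (fun x => g (f x)) p s := fun _ hu => by
  filter_upwards [h _ (hK.uniformContinuousAt_of_continuousAt g (fun _ _ => hg.continuousAt) hu)]
    with n hn x hx using hn x hx (hfK x hx)

end UniformConvergence

section RiemannSums

open Finset

theorem tendsto_inv_mul_sum_sub_of_tendstoUniformlyOn {F : ℝ → ℝ → ℝ} {f : ℝ → ℝ}
    (hF : TendstoUniformlyOn F f (𝓝[>] 0) (Icc 0 1)) {s : ℕ → Finset ℕ}
    (hs : ∀ N, s N ⊆ range N) :
    Tendsto (fun N : ℕ => (N : ℝ)⁻¹ * ∑ i ∈ s N, (F (N : ℝ)⁻¹ (i / N) - f (i / N)))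
      atTop (𝓝 0) := by
  rw [Metric.tendsto_nhds]
  intro ε hε
  have hN : Tendsto (fun N : ℕ => (N : ℝ)⁻¹) atTop (𝓝[>] 0) :=
    tendsto_inv_atTop_nhdsGT_zero.comp tendsto_natCast_atTop_atTop
  filter_upwards [hN.eventually (Metric.tendstoUniformlyOn_iff.mp hF (ε / 2) (by positivity))]
    with N hN
  have hcard : (N : ℝ)⁻¹ * #(s N) ≤ 1 :=
    inv_mul_le_one_of_le₀ (by simpa using Finset.card_le_card (hs N)) N.cast_nonneg
  rw [Real.dist_0_eq_abs]
  calc |(N : ℝ)⁻¹ * ∑ i ∈ s N, (F (N : ℝ)⁻¹ (i / N) - f (i / N))|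
      ≤ (N : ℝ)⁻¹ * ∑ i ∈ s N, |F (N : ℝ)⁻¹ (i / N) - f (i / N)| := by
        rw [abs_mul, abs_of_nonneg (by positivity)]
        gcongr
        exact abs_sum_le_sum_abs _ _
    _ ≤ (N : ℝ)⁻¹ * ∑ _i ∈ s N, ε / 2 := by
        gcongr with i hi
        have hiN : (i : ℝ) ≤ N := by exact_mod_cast (mem_range.mp (hs N hi)).le
        rw [← Real.dist_eq, dist_comm]
        exact (hN _ ⟨by positivity, div_le_one_of_le₀ hiN N.cast_nonneg⟩).le
    _ = (N : ℝ)⁻¹ * #(s N) * (ε / 2) := by rw [sum_const, nsmul_eq_mul, mul_assoc]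
    _ < ε := by nlinarith

theorem integral_unitInterval_eq_inv_mul_sum {f : ℝ → ℝ} (hf : Continuous f) {N : ℕ}
    (hN : 0 < N) :
    ∫ x in (0 : ℝ)..1, f x
      = (N : ℝ)⁻¹ * ∑ i ∈ range N, ∫ s in (0 : ℝ)..1, f ((N : ℝ)⁻¹ * s + i / N) := by
  have hN' : (N : ℝ) ≠ 0 := by positivity
  calc ∫ x in (0 : ℝ)..1, f x = ∫ x in ((0 : ℕ) : ℝ) / N..((N : ℕ) : ℝ) / N, f x := by
        simp [hN']
    _ = ∑ i ∈ range N, ∫ x in (i : ℝ) / N..((i + 1 : ℕ) : ℝ) / N, f x :=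
        (intervalIntegral.sum_integral_adjacent_intervals (a := fun k : ℕ => (k : ℝ) / N)
          fun k _ => hf.intervalIntegrable _ _).symm
    _ = _ := by
        rw [mul_sum]
        refine sum_congr rfl fun i _ => ?_
        rw [intervalIntegral.integral_comp_mul_add _ (inv_ne_zero hN'), smul_eq_mul, inv_inv,
          ← mul_assoc, inv_mul_cancel₀ hN', one_mul]
        congr 1 <;> push_cast <;> ring

theorem tendsto_riemannSum_Ico {f : ℝ → ℝ} (hf : Continuous f) :
    Tendsto (fun N : ℕ => (N : ℝ)⁻¹ * ∑ i ∈ Ico 1 N, f (i / N)) atTop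
      (𝓝 (∫ x in (0 : ℝ)..1, f x)) := by
  have haverage : TendstoUniformlyOn (fun h x => ∫ s in (0 : ℝ)..1, f (h * s + x)) f
      (𝓝[>] 0) (Icc 0 1) := by
    simpa using (isCompact_Icc.tendstoUniformlyOn_of_continuous
      (f := fun h x => ∫ s in (0 : ℝ)..1, f (h * s + x)) (by fun_prop) 0).mono_left
      (p' := 𝓝[>] 0) nhdsWithin_le_nhds
  have hfirst : Tendsto (fun N : ℕ => (N : ℝ)⁻¹ * f 0) atTop (𝓝 0) := by
    simpa using (tendsto_inv_atTop_zero.comp tendsto_natCast_atTop_atTop).mul_const (f 0)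
  have := (tendsto_const_nhds (x := ∫ x in (0 : ℝ)..1, f x)).sub
    ((tendsto_inv_mul_sum_sub_of_tendstoUniformlyOn haverage fun _ => subset_rfl).add hfirst)
  rw [add_zero, sub_zero] at this
  refine this.congr' ?_
  filter_upwards [eventually_gt_atTop 0] with N hN
  rw [integral_unitInterval_eq_inv_mul_sum hf hN, sum_sub_distrib,
    sum_range_eq_add_Ico (fun i : ℕ => f (i / N)) hN]
  simp only [CharP.cast_eq_zero, zero_div]
  ring

end RiemannSums

section SecondDifferences

variable {E : Type*} [NormedAddCommGroup E] [NormedSpace ℝ E]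

/-- The mean value inequality, applied first to `v ↦ γ' (x + v) - γ' (x - v) - 2 v • γ'' x` and
then to its primitive `u ↦ γ (x + u) + γ (x - u) - u² • γ'' x`. -/
theorem norm_secondDiff_sub_le {γ : ℝ → E} (hγ : ContDiff ℝ 2 γ) {x h ε : ℝ} (hh : 0 ≤ h)
    (hε : ∀ v ∈ Icc (x - h) (x + h), ‖deriv (deriv γ) v - deriv (deriv γ) x‖ ≤ ε) :
    ‖γ (x + h) - (2 : ℝ) • γ x + γ (x - h) - (h ^ 2) • deriv (deriv γ) x‖ ≤ 2 * ε * h ^ 2 := by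
  set c := deriv (deriv γ) x
  have hγ' : ∀ u, HasDerivAt γ (deriv γ u) u := fun u =>
    (hγ.differentiable (by norm_num) u).hasDerivAt
  have hγ'' : ∀ u, HasDerivAt (deriv γ) (deriv (deriv γ) u) u := fun u =>
    ((hγ.iterate_deriv' 1 1).differentiable one_ne_zero u).hasDerivAt
  have hε0 : 0 ≤ ε := (norm_nonneg _).trans (hε x ⟨by linarith, by linarith⟩)
  have hψ : ∀ v ∈ Icc 0 h, ‖deriv γ (x + v) - deriv γ (x - v) - (2 * v) • c‖ ≤ 2 * ε * v := by
    have key := norm_image_sub_le_of_norm_deriv_le_segment' (a := 0) (b := h)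
      (f := fun v => deriv γ (x + v) - deriv γ (x - v) - (2 * v) • c)
      (f' := fun v => deriv (deriv γ) (x + v) + deriv (deriv γ) (x - v) - (2 : ℝ) • c)
      (C := 2 * ε) (fun v _ => ?_) (fun v hv => ?_)
    · simpa using key
    · refine HasDerivAt.hasDerivWithinAt <| HasDerivAt.congr_deriv
        ((((hγ'' (x + v)).comp_const_add x v).sub ((hγ'' (x - v)).comp_const_sub x v)).sub
          (((hasDerivAt_id v).const_mul 2).smul_const c)) ?_
      simp only [mul_one, sub_neg_eq_add]
    · have h₁ := hε (x + v) ⟨by linarith [hv.1], by linarith [hv.2]⟩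
      have h₂ := hε (x - v) ⟨by linarith [hv.2], by linarith [hv.1]⟩
      calc _ = ‖(deriv (deriv γ) (x + v) - c) + (deriv (deriv γ) (x - v) - c)‖ := by
            rw [two_smul]; congr 1; abel
        _ ≤ 2 * ε := (norm_add_le _ _).trans (by linarith)
  have key := norm_image_sub_le_of_norm_deriv_le_segment' (a := 0) (b := h)
    (f := fun u => γ (x + u) + γ (x - u) - (u ^ 2) • c)
    (f' := fun u => deriv γ (x + u) - deriv γ (x - u) - (2 * u) • c)
    (C := 2 * ε * h) (fun u _ => ?_) (fun u hu => ?_) h ⟨hh, le_rfl⟩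
  · calc _ = ‖(γ (x + h) + γ (x - h) - (h ^ 2) • c)
            - (γ (x + 0) + γ (x - 0) - ((0 : ℝ) ^ 2) • c)‖ := by
          congr 1
          simp only [add_zero, sub_zero, two_smul, ne_eq, OfNat.ofNat_ne_zero,
            not_false_eq_true, zero_pow, zero_smul]
          abel
      _ ≤ 2 * ε * h * (h - 0) := key
      _ = 2 * ε * h ^ 2 := by ring
  · refine HasDerivAt.hasDerivWithinAt <| HasDerivAt.congr_deriv
      ((((hγ' (x + u)).comp_const_add x u).add ((hγ' (x - u)).comp_const_sub x u)).sub
        ((hasDerivAt_pow 2 u).smul_const c)) ?_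
    norm_num [sub_eq_add_neg]
  · exact (hψ u (Ico_subset_Icc_self hu)).trans (by gcongr; exact hu.2.le)

noncomputable def secondDiffQuot (γ : ℝ → E) (h x : ℝ) : E :=
  (h ^ 2)⁻¹ • (γ (x + h) - (2 : ℝ) • γ x + γ (x - h))

theorem tendstoUniformlyOn_secondDiffQuot {γ : ℝ → E} (hγ : ContDiff ℝ 2 γ) {K : Set ℝ}
    (hK : IsCompact K) :
    TendstoUniformlyOn (secondDiffQuot γ) (deriv (deriv γ)) (𝓝[>] 0) K := by
  have hγ'' : Continuous (deriv (deriv γ)) := (hγ.iterate_deriv' 0 2).continuous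
  rw [Metric.tendstoUniformlyOn_iff]
  intro ε hε
  obtain ⟨δ, hδ, hshift⟩ := Metric.eventually_nhds_iff.mp <| Metric.tendstoUniformlyOn_iff.mp
    (hK.tendstoUniformlyOn_of_continuous (f := fun v x => deriv (deriv γ) (x + v))
      (by fun_prop) 0) (ε / 4) (by positivity)
  filter_upwards [Ioo_mem_nhdsGT hδ] with h ⟨hh, hhδ⟩ x hx
  have hnear : ∀ v ∈ Icc (x - h) (x + h), ‖deriv (deriv γ) v - deriv (deriv γ) x‖ ≤ ε / 4 := by
    intro v hv
    have hvx : dist (v - x) 0 < δ := by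
      rw [Real.dist_eq, sub_zero, abs_lt]; constructor <;> linarith [hv.1, hv.2]
    simpa [dist_eq_norm'] using (hshift hvx x hx).le
  have hh2 : h ^ 2 ≠ 0 := by positivity
  calc dist (deriv (deriv γ) x) (secondDiffQuot γ h x)
      = (h ^ 2)⁻¹ * ‖γ (x + h) - (2 : ℝ) • γ x + γ (x - h) - (h ^ 2) • deriv (deriv γ) x‖ := by
        rw [dist_eq_norm', secondDiffQuot, ← norm_smul_of_nonneg (by positivity), smul_sub,
          smul_smul, inv_mul_cancel₀ hh2, one_smul]
    _ ≤ (h ^ 2)⁻¹ * (2 * (ε / 4) * h ^ 2) := by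
        gcongr; exact norm_secondDiff_sub_le hγ hh.le hnear
    _ < ε := by field_simp; linarith

theorem tendstoUniformlyOn_weighted_norm_secondDiffQuot_sq {γ : ℝ → E} (hγ : ContDiff ℝ 2 γ)
    {t : ℝ → ℝ} (ht : Continuous t) (σ : ℝ) {K : Set ℝ} (hK : IsCompact K) :
    TendstoUniformlyOn
      (fun h x => Real.exp (-(t x - t (x + h)) ^ 2 / (2 * σ ^ 2)) * ‖secondDiffQuot γ h x‖ ^ 2)
      (fun x => ‖deriv (deriv γ) x‖ ^ 2) (𝓝[>] 0) K := by
  have hweight : TendstoUniformlyOn (fun h x => Real.exp (-(t x - t (x + h)) ^ 2 / (2 * σ ^ 2)))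
      (fun _ => 1) (𝓝[>] 0) K := by
    have := (hK.tendstoUniformlyOn_of_continuous
      (f := fun h x => Real.exp (-(t x - t (x + h)) ^ 2 / (2 * σ ^ 2))) (by fun_prop) 0).mono_left
      (p' := 𝓝[>] 0) nhdsWithin_le_nhds
    norm_num at this
    exact this
  have hγ'' : Continuous (deriv (deriv γ)) := (hγ.iterate_deriv' 0 2).continuous
  have := (hweight.prodMk_diag (tendstoUniformlyOn_secondDiffQuot hγ hK)).comp_of_isCompact
    (hK.image (continuous_const.prodMk hγ'')) (g := fun p : ℝ × E => p.1 * ‖p.2‖ ^ 2)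
    (by fun_prop) fun x hx => mem_image_of_mem _ hx
  simp only [one_mul] at this
  exact this

theorem inv_mul_norm_secondDiffQuot_inv_sq (γ : ℝ → E) {N : ℝ} (hN : N ≠ 0) (x : ℝ) :
    N⁻¹ * ‖secondDiffQuot γ N⁻¹ x‖ ^ 2
      = N ^ 3 * ‖γ (x + N⁻¹) - (2 : ℝ) • γ x + γ (x - N⁻¹)‖ ^ 2 := by
  rw [secondDiffQuot, norm_smul, mul_pow, inv_pow, inv_inv, Real.norm_of_nonneg (by positivity)]
  field_simp

end SecondDifferences

theorem discrete_weighted_energy_tendsto_general {d : ℕ} (γ : ℝ → EuclideanSpace ℝ (Fin d))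
    (t : ℝ → ℝ) (hγ : ContDiff ℝ 2 γ) (ht : Continuous t) (σ : ℝ) :
    Tendsto (fun N : ℕ =>
        (N : ℝ) ^ 3 * ∑ i ∈ Finset.Ico 1 N,
          Real.exp (-(t ((i : ℝ) / N) - t (((i : ℝ) + 1) / N)) ^ 2 / (2 * σ ^ 2))
            * ‖γ (((i : ℝ) + 1) / N) - (2:ℝ) • γ ((i : ℝ) / N) + γ (((i : ℝ) - 1) / N)‖ ^ 2)
      atTop (nhds (∫ s in (0:ℝ)..1, ‖deriv (deriv γ) s‖ ^ 2)) := by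
  have hγ'' : Continuous (deriv (deriv γ)) := (hγ.iterate_deriv' 0 2).continuous
  have := (tendsto_riemannSum_Ico (f := fun x => ‖deriv (deriv γ) x‖ ^ 2) (by fun_prop)).add
    (tendsto_inv_mul_sum_sub_of_tendstoUniformlyOn
      (tendstoUniformlyOn_weighted_norm_secondDiffQuot_sq hγ ht σ isCompact_Icc)
      (s := fun N => Finset.Ico 1 N) fun N i hi => Finset.mem_range.mpr (Finset.mem_Ico.mp hi).2)
  rw [add_zero] at this
  refine this.congr' ?_
  filter_upwards [eventually_gt_atTop 0] with N hN
  rw [← mul_add, ← Finset.sum_add_distrib, Finset.mul_sum, Finset.mul_sum]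
  refine Finset.sum_congr rfl fun i _ => ?_
  rw [add_sub_cancel, mul_left_comm, inv_mul_norm_secondDiffQuot_inv_sq γ (by positivity),
    mul_left_comm, add_div, sub_div, one_div]

/-- Convergence of the normalized discrete survival-weighted SOSM energy
(with Gaussian weights on survival times sampled from a continuous `t`) to the continuum
curvature energy:
`N³ Σ_{i=1}^{N-1} exp(-(t(i/N) - t((i+1)/N))²/(2σ²)) ‖γ((i+1)/N) - 2γ(i/N) + γ((i-1)/N)‖²
  → ∫₀¹ ‖γ''(s)‖² ds` as `N → ∞`. -/
theorem discrete_weighted_energy_tendsto {d : ℕ} (γ : ℝ → EuclideanSpace ℝ (Fin d))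
    (t : ℝ → ℝ) (hγ : ContDiff ℝ 2 γ) (ht : Continuous t) (σ : ℝ) (hσ : 0 < σ) :
    Tendsto (fun N : ℕ =>
        (N : ℝ) ^ 3 * ∑ i ∈ Finset.Ico 1 N,
          Real.exp (-(t ((i : ℝ) / N) - t (((i : ℝ) + 1) / N)) ^ 2 / (2 * σ ^ 2))
            * ‖γ (((i : ℝ) + 1) / N) - (2:ℝ) • γ ((i : ℝ) / N) + γ (((i : ℝ) - 1) / N)‖ ^ 2)
      atTop (nhds (∫ s in (0:ℝ)..1, ‖deriv (deriv γ) s‖ ^ 2)) :=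
  discrete_weighted_energy_tendsto_general γ t hγ ht σ
end
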